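/- The metric ϱ is compatible with the order ≤_XY in the following sense: if α ≤_XY β ≤_XY γ, then ϱ(α,β) ≤ ϱ(α,γ) and ϱ(β,γ) ≤ ϱ(α,γ). Moreover, ϱ(α,β) = 1 if and only if {α,β} = {⟨0,1⟩, ⟨1,0⟩}. -/
import Mathlib


/-- The set of intuitionistic fuzzy values Ĩ = {⟨μ,ν⟩ ∈ [0,1]² : μ + ν ≤ 1}. -/
def IFV : Set (ℝ × ℝ) :=
  {p | 0 ≤ p.1 ∧ p.1 ≤ 1 ∧ 0 ≤ p.2 ∧ p.2 ≤ 1 ∧ p.1 + p.2 ≤ 1}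

/-- Score function s(α) = μ_α − ν_α. -/
def sc (p : ℝ × ℝ) : ℝ := p.1 - p.2

/-- Accuracy function h(α) = μ_α + ν_α. -/
def ac (p : ℝ × ℝ) : ℝ := p.1 + p.2

/-- Strict Xu–Yager order. -/
def ltXY (a b : ℝ × ℝ) : Prop := sc a < sc b ∨ (sc a = sc b ∧ ac a < ac b)

/-- Nonstrict Xu–Yager order. -/
def leXY (a b : ℝ × ℝ) : Prop := sc a < sc b ∨ (sc a = sc b ∧ ac a ≤ ac b)

open Classical in
/-- The distance ϱ on Ĩ. -/
noncomputable def rho (a b : ℝ × ℝ) : ℝ :=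
  if sc a = sc b then |ac a - ac b| / 3 else (1 + |sc a - sc b|) / 3

/-- ϱ is compatible with ≤_XY, and ϱ(α,β) = 1 exactly for the pair of
extreme elements ⟨0,1⟩ and ⟨1,0⟩. -/
theorem rho_order_compatible :
    (∀ a ∈ IFV, ∀ b ∈ IFV, ∀ c ∈ IFV, leXY a b → leXY b c →
      rho a b ≤ rho a c ∧ rho b c ≤ rho a c) ∧
    (∀ a ∈ IFV, ∀ b ∈ IFV, (rho a b = 1 ↔
      (a = ((0 : ℝ), (1 : ℝ)) ∧ b = ((1 : ℝ), (0 : ℝ))) ∨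
      (a = ((1 : ℝ), (0 : ℝ)) ∧ b = ((0 : ℝ), (1 : ℝ))))) := by
  have hsc : ∀ a ∈ IFV, -1 ≤ sc a ∧ sc a ≤ 1 := by
    rintro a ⟨h1, h2, h3, h4, h5⟩
    constructor <;> simp only [sc] <;> linarith
  have hac : ∀ a ∈ IFV, 0 ≤ ac a ∧ ac a ≤ 1 := by
    rintro a ⟨h1, h2, h3, h4, h5⟩
    constructor <;> simp only [ac] <;> linarith
  have hneg : ∀ a ∈ IFV, sc a = -1 → a = ((0 : ℝ), (1 : ℝ)) := by
    rintro ⟨x, y⟩ ⟨h1, h2, h3, h4, h5⟩ h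
    simp only [sc] at h
    have hx : x = 0 := by dsimp at *; linarith
    have hy : y = 1 := by dsimp at *; linarith
    simp [hx, hy]
  have hpos : ∀ a ∈ IFV, sc a = 1 → a = ((1 : ℝ), (0 : ℝ)) := by
    rintro ⟨x, y⟩ ⟨h1, h2, h3, h4, h5⟩ h
    simp only [sc] at h
    have hy : y = 0 := by dsimp at *; linarith
    have hx : x = 1 := by dsimp at *; linarith
    simp [hx, hy]
  constructor
  · intro a ha b hb c hc hab hbc
    obtain ⟨ha1, ha2⟩ := hsc a ha
    obtain ⟨hb1, hb2⟩ := hsc b hb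
    obtain ⟨hc1, hc2⟩ := hsc c hc
    obtain ⟨ha3, ha4⟩ := hac a ha
    obtain ⟨hb3, hb4⟩ := hac b hb
    obtain ⟨hc3, hc4⟩ := hac c hc
    have hsab : sc a ≤ sc b := by rcases hab with h | ⟨h, _⟩ <;> linarith
    have hsbc : sc b ≤ sc c := by rcases hbc with h | ⟨h, _⟩ <;> linarith
    unfold rho
    constructor
    · split_ifs with h1 h2 h2
      · -- sc a = sc b, sc a = sc c
        have hb' : ac a ≤ ac b := by
          rcases hab with h | ⟨_, h⟩; · linarith
          exact h
        have hc' : ac b ≤ ac c := by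
          rcases hbc with h | ⟨_, h⟩; · exfalso; linarith [h1.symm.trans h2]
          exact h
        rw [abs_of_nonpos (by linarith), abs_of_nonpos (by linarith)]
        linarith
      · -- sc a = sc b ≠ sc c
        have : |ac a - ac b| ≤ 1 := abs_le.2 ⟨by linarith, by linarith⟩
        have : (0:ℝ) ≤ |sc a - sc c| := abs_nonneg _
        linarith
      · exact absurd (le_antisymm hsab (by linarith)) h1
      · have hlt : sc a < sc b := lt_of_le_of_ne hsab h1
        rw [abs_of_nonpos (by linarith), abs_of_nonpos (by linarith)]
        linarith
    · split_ifs with h1 h2 h2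
      · have hb' : ac a ≤ ac b := by
          rcases hab with h | ⟨_, h⟩; · linarith
          exact h
        have hc' : ac b ≤ ac c := by
          rcases hbc with h | ⟨_, h⟩; · exfalso; linarith
          exact h
        rw [abs_of_nonpos (by linarith), abs_of_nonpos (by linarith)]
        linarith
      · have : |ac b - ac c| ≤ 1 := abs_le.2 ⟨by linarith, by linarith⟩
        have : (0:ℝ) ≤ |sc a - sc c| := abs_nonneg _
        linarith
      · exact absurd (le_antisymm hsbc (by linarith)) h1
      · have hlt : sc b < sc c := lt_of_le_of_ne hsbc h1
        rw [abs_of_nonpos (by linarith), abs_of_nonpos (by linarith)]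
        linarith
  · intro a ha b hb
    obtain ⟨ha1, ha2⟩ := hsc a ha
    obtain ⟨hb1, hb2⟩ := hsc b hb
    obtain ⟨ha3, ha4⟩ := hac a ha
    obtain ⟨hb3, hb4⟩ := hac b hb
    constructor
    · intro h
      unfold rho at h
      split_ifs at h with h1
      · exfalso
        have : |ac a - ac b| ≤ 1 := abs_le.2 ⟨by linarith, by linarith⟩
        linarith
      · have habs : |sc a - sc b| = 2 := by linarith
        rcases abs_eq (by norm_num : (0:ℝ) ≤ 2) |>.1 habs with h2 | h2
        · right
          exact ⟨hpos a ha (by linarith), hneg b hb (by linarith)⟩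
        · left
          exact ⟨hneg a ha (by linarith), hpos b hb (by linarith)⟩
    · rintro (⟨rfl, rfl⟩ | ⟨rfl, rfl⟩) <;>
        · unfold rho sc ac
          norm_num
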